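/- For every d ≥ 1, p ∈ ℕ, and c ∈ (0,1], there exists μ₀ > 0, depending only on d, p and c, with the following property: for every family of real coefficients (W_s), indexed by multi-indices s ∈ ℕ^d with |s| := s₁ + … + s_d ≤ p, satisfying Σ_{|s| ≤ p} W_s² = 1, and every Lebesgue-measurable set S contained in the closed Euclidean unit ball B of ℝ^d with λ(S) ≥ c·λ(B), one has ∫_S (Σ_{|s| ≤ p} W_s · u^s)² du ≥ μ₀, where u^s = u₁^{s₁} ⋯ u_d^{s_d} and λ denotes Lebesgue measure. -/

import Mathlib

/-!
The zero set of a nonzero polynomial is Lebesgue-null (induction on the number of variables and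
Fubini), so for each fixed `P` the measure of `{u ∈ B | |P u| ≤ t}` tends to `0` as `t → 0`.
Because `P` depends continuously on its coefficients, uniformly on the compact ball `B`, a
threshold that works for one coefficient vector works (halved) on a neighbourhood of it, and
compactness of the unit sphere of coefficient vectors yields one `t > 0` for which
`λ {u ∈ B | |P u| ≤ t} < c λ(B) / 2` for all admissible `P`. Then `P² ≥ t²` on a part of `S`
of measure at least `c λ(B) / 2`, so `μ₀ = t² c λ(B) / 2` works.
-/

open MeasureTheory Filter Topology Set
open scoped ENNReal

section SmallValues

variable {α : Type*} [MeasurableSpace α] {μ : Measure α} {B : Set α}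

theorem exists_pos_measure_abs_le_lt {f : α → ℝ} (hf : Measurable f) (hB : MeasurableSet B)
    (hμB : μ B ≠ ∞) (hzero : μ (B ∩ {u | f u = 0}) = 0) {η : ℝ≥0∞} (hη : 0 < η) :
    ∃ t > 0, μ (B ∩ {u | |f u| ≤ t}) < η := by
  have hlim := tendsto_measure_biInter_gt (μ := μ) (s := fun t => B ∩ {u | |f u| ≤ t})
    (a := 0)
    (fun t _ => (hB.inter (measurableSet_le hf.abs measurable_const)).nullMeasurableSet)
    (fun s t _ hst => inter_subset_inter_right _ fun u hu => le_trans hu hst)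
    ⟨1, one_pos, measure_ne_top_of_subset inter_subset_left hμB⟩
  have hInter : μ (⋂ t > (0 : ℝ), B ∩ {u | |f u| ≤ t}) = 0 := by
    refine measure_mono_null (fun u hu => ?_) hzero
    simp only [mem_iInter] at hu
    exact ⟨(hu 1 one_pos).1,
      abs_nonpos_iff.mp (le_of_forall_gt_imp_ge_of_dense fun t ht => (hu t ht).2)⟩
  rw [hInter] at hlim
  exact ((hlim.eventually (gt_mem_nhds hη)).and self_mem_nhdsWithin).exists.imp
    fun t ht => ⟨ht.2, ht.1⟩

theorem sq_mul_sub_le_setIntegral_sq {S : Set α} {f : α → ℝ} (hf : Measurable f)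
    (hSB : S ⊆ B) (hμS : μ S ≠ ∞) (hint : IntegrableOn (fun u => f u ^ 2) S μ) {t : ℝ}
    (ht : 0 ≤ t) :
    t ^ 2 * (μ S - μ (B ∩ {u | |f u| ≤ t})).toReal ≤ ∫ u in S, f u ^ 2 ∂μ := by
  have hlarge : MeasurableSet {u | t ^ 2 ≤ f u ^ 2} :=
    measurableSet_le measurable_const (hf.pow_const 2)
  have hsplit : μ S ≤ μ ({u | t ^ 2 ≤ f u ^ 2} ∩ S) + μ (B ∩ {u | |f u| ≤ t}) := by
    refine (measure_mono fun u hu => ?_).trans (measure_union_le _ _)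
    by_cases hu' : t ^ 2 ≤ f u ^ 2
    · exact Or.inl ⟨hu', hu⟩
    · exact Or.inr ⟨hSB hu, (abs_lt_of_sq_lt_sq (not_le.mp hu') ht).le⟩
  calc t ^ 2 * (μ S - μ (B ∩ {u | |f u| ≤ t})).toReal
      ≤ t ^ 2 * (μ.restrict S).real {u | t ^ 2 ≤ f u ^ 2} := by
        rw [measureReal_def, Measure.restrict_apply hlarge]
        gcongr
        · exact measure_ne_top_of_subset inter_subset_right hμS
        · exact tsub_le_iff_right.mpr hsplit
    _ ≤ ∫ u in S, f u ^ 2 ∂μ :=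
        mul_meas_ge_le_integral_of_nonneg (ae_of_all _ fun u => sq_nonneg _) hint _

variable {X : Type*} [TopologicalSpace X] [TopologicalSpace α] [OpensMeasurableSpace α]
  {F : X → α → ℝ} {η : ℝ≥0∞}

theorem eventually_measure_abs_le_lt (hF : Continuous (Function.uncurry F)) (hBc : IsCompact B)
    (hB : MeasurableSet B) (hμB : μ B ≠ ∞) {x : X} (hzero : μ (B ∩ {u | F x u = 0}) = 0)
    (hη : 0 < η) :
    ∀ᶠ z : ℝ × X in 𝓝 (0, x), 0 < z.1 → μ (B ∩ {u | |F z.2 u| ≤ z.1}) < η := by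
  obtain ⟨t, ht, hμt⟩ := exists_pos_measure_abs_le_lt (f := F x)
    (hF.comp (Continuous.prodMk_right x)).measurable hB hμB hzero hη
  obtain ⟨v, hv, hclose⟩ := hBc.mem_uniformity_of_prod hF.continuousOn (mem_univ x)
    (Metric.dist_mem_uniformity (half_pos ht))
  rw [nhdsWithin_univ] at hv
  filter_upwards [prod_mem_nhds (Iio_mem_nhds (half_pos ht)) hv] with ⟨r, x'⟩ ⟨hr, hx'⟩ _
  refine lt_of_le_of_lt (measure_mono ?_) hμt
  rintro u ⟨huB, hu⟩
  refine ⟨huB, ?_⟩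
  have hdist : |F x' u - F x u| < t / 2 := hclose x' hx' u huB
  change |F x' u| ≤ r at hu
  change |F x u| ≤ t
  linarith [abs_sub_abs_le_abs_sub (F x u) (F x' u), abs_sub_comm (F x' u) (F x u),
    show r < t / 2 from hr]

theorem IsCompact.exists_pos_forall_measure_abs_le_lt {K : Set X} (hK : IsCompact K)
    (hF : Continuous (Function.uncurry F)) (hBc : IsCompact B) (hB : MeasurableSet B)
    (hμB : μ B ≠ ∞) (hzero : ∀ x ∈ K, μ (B ∩ {u | F x u = 0}) = 0) (hη : 0 < η) :
    ∃ t > 0, ∀ x ∈ K, μ (B ∩ {u | |F x u| ≤ t}) < η := by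
  have hsmall := hK.eventually_forall_of_forall_eventually
    (P := fun r x => 0 < r → μ (B ∩ {u | |F x u| ≤ r}) < η)
    fun x hx => eventually_measure_abs_le_lt hF hBc hB hμB (hzero x hx) hη
  obtain ⟨t, hsmall, ht⟩ :=
    ((hsmall.filter_mono nhdsWithin_le_nhds).and (self_mem_nhdsWithin (s := Ioi 0))).exists
  exact ⟨t, ht, fun x hx => hsmall x hx ht⟩

end SmallValues

namespace MvPolynomial

theorem volume_setOf_eval_eq_zero {n : ℕ} {P : MvPolynomial (Fin n) ℝ} (hP : P ≠ 0) :
    volume {u : Fin n → ℝ | eval u P = 0} = 0 := by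
  induction n with
  | zero =>
    obtain ⟨a, rfl⟩ := C_surjective (Fin 0) P
    simp_all
  | succ n ih =>
    set Q := finSuccEquiv ℝ n P
    obtain ⟨k, hk⟩ : ∃ k, Q.coeff k ≠ 0 := by
      by_contra! h
      exact hP ((finSuccEquiv ℝ n).injective (Polynomial.ext fun k => by simp [Q, h k]))
    let g : ((Fin n → ℝ) × ℝ) ≃ᵐ (Fin (n + 1) → ℝ) :=
      MeasurableEquiv.prodComm.trans (MeasurableEquiv.piFinSuccAbove (fun _ => ℝ) 0).symm
    have hg : MeasurePreserving g (volume.prod volume) volume :=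
      (volume_preserving_piFinSuccAbove (fun _ => ℝ) 0).symm.comp
        Measure.measurePreserving_swap
    have hZ : MeasurableSet {u : Fin (n + 1) → ℝ | eval u P = 0} :=
      measurableSet_eq_fun (continuous_eval P).measurable measurable_const
    rw [← hg.measure_preimage_equiv]
    refine Measure.measure_prod_null_of_ae_null (hZ.preimage g.measurable) ?_
    -- Off the null zero set of `Q.coeff k`, a section is the root set of a nonzero polynomial.
    filter_upwards [measure_eq_zero_iff_ae_notMem.mp (ih hk)] with y hy
    have hQy : Q.map (eval y) ≠ 0 := fun h => hy (by simpa using congrArg (·.coeff k) h)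
    have hsection :
        Prod.mk y ⁻¹' (g ⁻¹' {u | eval u P = 0}) = {x | (Q.map (eval y)).IsRoot x} := by
      ext x
      simp [g, Q, Fin.consEquiv, MeasurableEquiv.prodComm, ← eval_eq_eval_mv_eval']
    rw [hsection]
    exact (Polynomial.finite_setOfPred_isRoot hQy).measure_zero _

variable {σ : Type*}

theorem sum_coeff_of_support_subset {R M : Type*} [CommSemiring R] [AddCommMonoid M]
    {P : MvPolynomial σ R} {A : Finset (σ →₀ ℕ)} (hP : P.support ⊆ A)
    {g : (σ →₀ ℕ) → R → M} (hg : ∀ s, g s 0 = 0) :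
    ∑ s : A, g s (coeff s.1 P) = ∑ s ∈ P.support, g s (coeff s P) := by
  rw [Finset.sum_coe_sort A fun s => g s (coeff s P)]
  exact (Finset.sum_subset hP fun s _ hs => by rw [notMem_support_iff.mp hs, hg]).symm

variable (A : Finset (σ →₀ ℕ))

noncomputable def ofCoeffs (w : EuclideanSpace ℝ A) : MvPolynomial σ ℝ :=
  ∑ s : A, monomial s.1 (w s)

theorem coeff_ofCoeffs (w : EuclideanSpace ℝ A) (s : A) : coeff s.1 (ofCoeffs A w) = w s := by
  classical
  simp only [ofCoeffs, coeff_sum, coeff_monomial, ← Subtype.ext_iff, Finset.sum_ite_eq',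
    Finset.mem_univ, if_true]

theorem ofCoeffs_ne_zero {w : EuclideanSpace ℝ A} (hw : w ≠ 0) : ofCoeffs A w ≠ 0 := by
  contrapose! hw
  ext s
  simpa [hw] using (coeff_ofCoeffs A w s).symm

theorem continuous_eval_ofCoeffs :
    Continuous fun z : EuclideanSpace ℝ A × (σ → ℝ) => eval z.2 (ofCoeffs A z.1) := by
  simp only [ofCoeffs, map_sum, eval_monomial, Finsupp.prod]
  fun_prop

theorem exists_ofCoeffs_eq {P : MvPolynomial σ ℝ} (hP : P.support ⊆ A)
    (hsq : ∑ s ∈ P.support, coeff s P ^ 2 = 1) :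
    ∃ w ∈ Metric.sphere (0 : EuclideanSpace ℝ A) 1, ofCoeffs A w = P := by
  refine ⟨WithLp.toLp 2 fun s => coeff s.1 P, ?_, ?_⟩
  · have hnorm : ‖WithLp.toLp 2 fun s : A => coeff s.1 P‖ ^ 2 = 1 := by
      rw [EuclideanSpace.real_norm_sq_eq, ← hsq]
      exact sum_coeff_of_support_subset hP (g := fun _ a => a ^ 2) fun _ => zero_pow two_ne_zero
    rw [mem_sphere_zero_iff_norm]
    exact (pow_eq_one_iff_of_nonneg (norm_nonneg _) two_ne_zero).mp hnorm
  · conv_rhs => rw [P.as_sum]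
    exact sum_coeff_of_support_subset hP (g := fun s a => monomial s a) fun _ => monomial_zero

end MvPolynomial

section UnitBall

variable {ι : Type*} [Fintype ι]

theorem isCompact_setOf_sum_sq_le_one : IsCompact {u : ι → ℝ | ∑ i, u i ^ 2 ≤ 1} := by
  refine Metric.isCompact_of_isClosed_isBounded (isClosed_le (by fun_prop) continuous_const)
    ((Metric.isBounded_closedBall (x := 0) (r := 1)).subset fun u hu => ?_)
  rw [mem_closedBall_zero_iff, pi_norm_le_iff_of_nonneg zero_le_one]
  intro i
  rw [Real.norm_eq_abs, ← sq_le_one_iff_abs_le_one]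
  exact (Finset.single_le_sum (fun j _ => sq_nonneg (u j)) (Finset.mem_univ i)).trans hu

theorem volume_setOf_sum_sq_le_one_pos : 0 < volume {u : ι → ℝ | ∑ i, u i ^ 2 ≤ 1} :=
  ((isOpen_lt (by fun_prop) continuous_const).measure_pos volume
    (⟨0, by simp⟩ : {u : ι → ℝ | ∑ i, u i ^ 2 < 1}.Nonempty)).trans_le
    (measure_mono <| ofPred_subset_ofPred.mpr fun _ => le_of_lt)

end UnitBall

open MvPolynomial in
theorem polynomial_mass_lower_bound (d p : ℕ) (c : ℝ)
    (hc0 : 0 < c) :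
    ∃ μ₀ : ℝ, 0 < μ₀ ∧
      ∀ P : MvPolynomial (Fin d) ℝ, P.totalDegree ≤ p →
        (∑ s ∈ P.support, (MvPolynomial.coeff s P) ^ 2) = 1 →
        ∀ S : Set (Fin d → ℝ), MeasurableSet S →
          S ⊆ {u : Fin d → ℝ | ∑ i, (u i) ^ 2 ≤ 1} →
          ENNReal.ofReal c * volume {u : Fin d → ℝ | ∑ i, (u i) ^ 2 ≤ 1} ≤ volume S →
          μ₀ ≤ ∫ u in S, (MvPolynomial.eval u P) ^ 2 := by
  set B := {u : Fin d → ℝ | ∑ i, u i ^ 2 ≤ 1}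
  have hBc : IsCompact B := isCompact_setOf_sum_sq_le_one
  have hμB : volume B ≠ ∞ := hBc.measure_lt_top.ne
  set η := ENNReal.ofReal c * volume B / 2
  have hη : 0 < η := ENNReal.half_pos
    (ENNReal.mul_pos (ENNReal.ofReal_pos.mpr hc0).ne' volume_setOf_sum_sq_le_one_pos.ne').ne'
  set A := (Finsupp.finite_of_degree_le (σ := Fin d) p).toFinset
  obtain ⟨t, ht, hsmall⟩ :=
    (isCompact_sphere (0 : EuclideanSpace ℝ A) 1).exists_pos_forall_measure_abs_le_lt
      (continuous_eval_ofCoeffs A) hBc hBc.isClosed.measurableSet hμB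
      (fun w hw => measure_mono_null inter_subset_right <| volume_setOf_eval_eq_zero <|
        ofCoeffs_ne_zero A <| ne_zero_of_mem_unit_sphere ⟨w, hw⟩) hη
  refine ⟨t ^ 2 * η.toReal, mul_pos (pow_pos ht 2) (ENNReal.toReal_pos hη.ne' (by finiteness)),
    fun P hP hsq S _ hSB hSμ => ?_⟩
  obtain ⟨w, hw, rfl⟩ := exists_ofCoeffs_eq A
    (fun s hs => (Set.Finite.mem_toFinset _).mpr ((le_totalDegree hs).trans hP)) hsq
  have hμS : volume S ≠ ∞ := measure_ne_top_of_subset hSB hμB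
  have hgood : η ≤ volume S - volume (B ∩ {u | |eval u (ofCoeffs A w)| ≤ t}) :=
    ENNReal.le_sub_of_add_le_right (measure_ne_top_of_subset inter_subset_left hμB) <|
      (add_le_add_right (hsmall w hw).le η).trans ((ENNReal.add_halves _).trans_le hSμ)
  calc t ^ 2 * η.toReal
      ≤ t ^ 2 * (volume S - volume (B ∩ {u | |eval u (ofCoeffs A w)| ≤ t})).toReal := by
        gcongr
        exact ne_top_of_le_ne_top hμS tsub_le_self
    _ ≤ ∫ u in S, eval u (ofCoeffs A w) ^ 2 :=
        sq_mul_sub_le_setIntegral_sq (continuous_eval _).measurable hSB hμS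
          (((continuous_eval _).pow 2).continuousOn.integrableOn_compact hBc |>.mono_set hSB)
          ht.le
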